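/- arXiv:2107.01764 — 3 statements merged into one kernel-verified Lean document; each statement's English description precedes it below -/
import Mathlib

section
/- Let y : [0,∞) → ℝ be a nonnegative C¹ function satisfying y'(t) ≤ η − β·y(t)^a for all t > 0, where η > 0, β > 0, and a > 1. Then for every t > 0, y(t) ≤ (η/β)^(1/a) + (1/(β(a−1)t))^(1/(a−1)). -/
/-!
For every `K ≥ 0` with `β K^a > η`, the function `K + z`, where `z` is the solution of
`z' = -β z^a` that blows up at `t = 0`, is a strict supersolution: since `(K + z)^a ≥ K^a + z^a`,
one has `η - β (K + z)^a < -β z^a = (K + z)'`. Because `z(0+) = ∞`, `y` starts below `K + z`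
at some small time, and the fencing theorem keeps it there. Letting `K ↓ (η/β)^(1/a)` gives the
bound.
-/

open Set Filter Topology

/-- The solution of `z' = -β z^a` on `(0, ∞)` with `z(0+) = ∞`. -/
noncomputable def decayProfile (β a t : ℝ) : ℝ := (1 / (β * (a - 1) * t)) ^ (1 / (a - 1))

lemma decayProfile_eq_rpow_neg {β a t : ℝ} (h : 0 ≤ β * (a - 1) * t) :
    decayProfile β a t = (β * (a - 1) * t) ^ (-(a - 1)⁻¹) := by
  rw [decayProfile, one_div, Real.inv_rpow h, Real.rpow_neg h, one_div]

lemma tendsto_decayProfile_nhdsGT_zero {β a : ℝ} (hβ : 0 < β) (ha : 1 < a) :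
    Tendsto (decayProfile β a) (𝓝[>] 0) atTop := by
  have hc : 0 < β * (a - 1) := mul_pos hβ (sub_pos.2 ha)
  have hlin : Tendsto (fun t => β * (a - 1) * t) (𝓝[>] 0) (𝓝[>] 0) := by
    refine tendsto_nhdsWithin_iff.2 ⟨?_, ?_⟩
    · exact ((continuous_const_mul _).tendsto' 0 0 (mul_zero _)).mono_left nhdsWithin_le_nhds
    · filter_upwards [self_mem_nhdsWithin] with t ht using mul_pos hc ht
  refine ((tendsto_rpow_neg_nhdsGT_zero
    (neg_neg_iff_pos.2 (inv_pos.2 (sub_pos.2 ha)))).comp hlin).congr' ?_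
  filter_upwards [self_mem_nhdsWithin] with t ht
  exact (decayProfile_eq_rpow_neg (mul_pos hc ht).le).symm

lemma hasDerivAt_decayProfile {β a t : ℝ} (hβ : 0 < β) (ha : 1 < a) (ht : 0 < t) :
    HasDerivAt (decayProfile β a) (-β * decayProfile β a t ^ a) t := by
  have ha1 : a - 1 ≠ 0 := (sub_pos.2 ha).ne'
  have hct : 0 < β * (a - 1) * t := mul_pos (mul_pos hβ (sub_pos.2 ha)) ht
  set q := -(a - 1)⁻¹
  have hlin : HasDerivAt (fun s => β * (a - 1) * s) (β * (a - 1)) t := by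
    simpa using (hasDerivAt_id t).const_mul (β * (a - 1))
  have hcomp := (Real.hasDerivAt_rpow_const (p := q) (Or.inl hct.ne')).comp t hlin
  have hexp : q - 1 = q * a := by simp only [q]; field_simp; ring
  have hcoef : q * (β * (a - 1)) = -β := by simp only [q]; field_simp
  refine (hcomp.congr_of_eventuallyEq ?_).congr_deriv ?_
  · filter_upwards [Ioi_mem_nhds ht] with s hs
    exact decayProfile_eq_rpow_neg (mul_pos (mul_pos hβ (sub_pos.2 ha)) hs).le
  · rw [decayProfile_eq_rpow_neg hct.le, ← Real.rpow_mul hct.le, hexp, ← hcoef]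
    ring

lemma sub_mul_rpow_add_lt_neg_mul_rpow {η β K z a : ℝ} (hβ : 0 ≤ β) (ha : 1 ≤ a)
    (hK : 0 ≤ K) (hz : 0 ≤ z) (hηK : η < β * K ^ a) :
    η - β * (K + z) ^ a < -β * z ^ a := by
  have := mul_le_mul_of_nonneg_left (Real.add_rpow_le_rpow_add hK hz ha) hβ
  linarith

theorem le_add_decayProfile {y : ℝ → ℝ} {η β a K : ℝ} (hβ : 0 < β) (ha : 1 < a)
    (hy0 : ContinuousWithinAt y (Ici 0) 0) (hy : DifferentiableOn ℝ y (Ioi 0))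
    (hineq : ∀ t, 0 < t → deriv y t ≤ η - β * y t ^ a) (hK : 0 ≤ K) (hηK : η < β * K ^ a)
    {t : ℝ} (ht : 0 < t) : y t ≤ K + decayProfile β a t := by
  have hstart : ∀ᶠ s in 𝓝[>] 0, y s ≤ K + decayProfile β a s := by
    have hy0' : Tendsto (fun s => -y s) (𝓝[>] 0) (𝓝 (-y 0)) :=
      (hy0.mono Ioi_subset_Ici_self).tendsto.neg
    filter_upwards [((tendsto_decayProfile_nhdsGT_zero hβ ha).atTop_add hy0').eventually_ge_atTop 0]
      with s hs
    linarith
  have hsmall : ∀ᶠ s in 𝓝[>] 0, s ∈ Ioo 0 t := Ioo_mem_nhdsGT ht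
  obtain ⟨t₀, ⟨ht₀, ht₀t⟩, hyt₀⟩ := (hsmall.and hstart).exists
  have hdiff : ∀ x ∈ Icc t₀ t, DifferentiableAt ℝ y x := fun x hx =>
    hy.differentiableAt (Ioi_mem_nhds (ht₀.trans_le hx.1))
  have hB : ∀ x ∈ Icc t₀ t,
      HasDerivAt (fun s => K + decayProfile β a s) (-β * decayProfile β a x ^ a) x :=
    fun x hx => (hasDerivAt_decayProfile hβ ha (ht₀.trans_le hx.1)).const_add K
  refine image_le_of_deriv_right_lt_deriv_boundary' (f' := deriv y)
    (fun x hx => (hdiff x hx).continuousAt.continuousWithinAt)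
    (fun x hx => (hdiff x (Ico_subset_Icc_self hx)).hasDerivAt.hasDerivWithinAt) hyt₀
    (fun x hx => (hB x hx).continuousAt.continuousWithinAt)
    (fun x hx => (hB x (Ico_subset_Icc_self hx)).hasDerivWithinAt) ?_ ⟨ht₀t.le, le_rfl⟩
  intro x hx hyx
  have hx0 : 0 < x := ht₀.trans_le hx.1
  have hz : 0 ≤ decayProfile β a x := Real.rpow_nonneg (by positivity) _
  calc deriv y x ≤ η - β * (K + decayProfile β a x) ^ a := hyx ▸ hineq x hx0
    _ < -β * decayProfile β a x ^ a := sub_mul_rpow_add_lt_neg_mul_rpow hβ.le ha.le hK hz hηK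

theorem stmt_0_general (y : ℝ → ℝ) (η β a : ℝ)
    (hη : 0 < η) (hβ : 0 < β) (ha : 1 < a)
    (hy_C1 : ContDiff ℝ 1 y)
    (hineq : ∀ t, 0 < t → deriv y t ≤ η - β * y t ^ a) :
    ∀ t, 0 < t →
      y t ≤ (η / β) ^ (1 / a) + (1 / (β * (a - 1) * t)) ^ (1 / (a - 1)) := by
  intro t ht
  have hy : Differentiable ℝ y := hy_C1.differentiable one_ne_zero
  have hηβ : 0 ≤ η / β := (div_pos hη hβ).le
  suffices ∀ K, (η / β) ^ (1 / a) < K → y t - decayProfile β a t ≤ K by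
    have := le_of_forall_gt_imp_ge_of_dense this
    rw [decayProfile] at this
    linarith
  intro K hK
  have hK0 : 0 ≤ K := (Real.rpow_nonneg hηβ _).trans hK.le
  rw [one_div, Real.rpow_inv_lt_iff_of_pos hηβ hK0 (by linarith), div_lt_iff₀' hβ] at hK
  have := le_add_decayProfile hβ ha hy.continuous.continuousWithinAt hy.differentiableOn hineq
    hK0 hK ht
  linarith

theorem stmt_0 (y : ℝ → ℝ) (η β a : ℝ)
    (hη : 0 < η) (hβ : 0 < β) (ha : 1 < a)
    (hy_nonneg : ∀ t, 0 ≤ t → 0 ≤ y t)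
    (hy_C1 : ContDiff ℝ 1 y)
    (hineq : ∀ t, 0 < t → deriv y t ≤ η - β * y t ^ a) :
    ∀ t, 0 < t →
      y t ≤ (η / β) ^ (1 / a) + (1 / (β * (a - 1) * t)) ^ (1 / (a - 1)) :=
  stmt_0_general y η β a hη hβ ha hy_C1 hineq
end

section
/- Let f : (0,∞) → ℝ be nonnegative and non-increasing, and y : (0,∞) → ℝ nonnegative C¹ satisfying y'(t) ≤ f(t) − β·y(t)^a for t > 0 with a > 1, β > 0. Then for every t₀ > 0 and every t > t₀, y(t) ≤ (f(t₀)/β)^(1/a) + (1/(β(a−1)(t−t₀)))^(1/(a−1)). -/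
/-!
The function `ψ(x) = (β (a - 1) (x - t₀)) ^ (-1 / (a - 1))` solves `ψ' = -β ψ ^ a` on `(t₀, ∞)`
and blows up at `t₀`. With `B = (f t₀ / β) ^ (1 / a)`, superadditivity of `u ↦ u ^ a` and the
monotonicity of `f` show that wherever `y ≥ B + ψ` on `(t₀, ∞)`, we have
`y' ≤ f t₀ - β (B ^ a + ψ ^ a) = ψ'`. Since `B + ψ` exceeds `max y` on `[t₀, t]` just to the
right of `t₀`, a comparison argument keeps `y` below `B + ψ` up to time `t`.
-/

open Set Filter Topology

theorem image_le_of_deriv_right_le_deriv_of_le_boundary {f f' : ℝ → ℝ} {a b : ℝ}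
    (hf : ContinuousOn f (Icc a b)) (hf' : ∀ x ∈ Ico a b, HasDerivWithinAt f (f' x) (Ici x) x)
    {B B' : ℝ → ℝ} (ha : f a ≤ B a) (hB : ContinuousOn B (Icc a b))
    (hB' : ∀ x ∈ Ico a b, HasDerivWithinAt B (B' x) (Ici x) x)
    (bound : ∀ x ∈ Ico a b, B x ≤ f x → f' x ≤ B' x) :
    ∀ ⦃x⦄, x ∈ Icc a b → f x ≤ B x := by
  intro x hx
  -- the fences `B + ε (· - a)` satisfy the strict boundary condition of the library lemma
  have fence : ∀ ε > 0, f x ≤ B x + ε * (x - a) := by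
    intro ε hε
    refine image_le_of_deriv_right_lt_deriv_boundary' (B := fun x => B x + ε * (x - a))
      (B' := fun x => B' x + ε) hf hf' (by simpa using ha) (hB.add (by fun_prop)) ?_ ?_ hx
    · intro z hz
      have hlin : HasDerivWithinAt (fun x => ε * (x - a)) ε (Ici z) z := by
        simpa using ((hasDerivWithinAt_id z (Ici z)).sub_const a).const_mul ε
      exact (hB' z hz).add hlin
    · intro z hz heq
      have hBz : B z ≤ f z := by rw [heq]; nlinarith [hz.1]
      linarith [bound z hz hBz]
  have hlim : Tendsto (fun ε => B x + ε * (x - a)) (𝓝[>] 0) (𝓝 (B x)) :=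
    ((by fun_prop : Continuous fun ε : ℝ => B x + ε * (x - a)).tendsto' 0 _ (by simp)).mono_left
      nhdsWithin_le_nhds
  exact ge_of_tendsto hlim (eventually_nhdsWithin_of_forall fence)

noncomputable def blowupSolution (β a t₀ x : ℝ) : ℝ :=
  (β * (a - 1) * (x - t₀)) ^ (-(a - 1)⁻¹)

section BlowupSolution

variable {β a t₀ x : ℝ}

theorem blowupSolution_nonneg (hβ : 0 ≤ β) (ha : 1 ≤ a) (hx : t₀ ≤ x) :
    0 ≤ blowupSolution β a t₀ x :=
  Real.rpow_nonneg (mul_nonneg (mul_nonneg hβ (sub_nonneg.2 ha)) (sub_nonneg.2 hx)) _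

theorem blowupSolution_eq (hβ : 0 ≤ β) (ha : 1 ≤ a) (hx : t₀ ≤ x) :
    blowupSolution β a t₀ x = (1 / (β * (a - 1) * (x - t₀))) ^ (1 / (a - 1)) := by
  have hz : 0 ≤ β * (a - 1) * (x - t₀) :=
    mul_nonneg (mul_nonneg hβ (sub_nonneg.2 ha)) (sub_nonneg.2 hx)
  rw [blowupSolution, Real.rpow_neg hz, ← Real.inv_rpow hz, one_div, one_div]

theorem hasDerivAt_blowupSolution (hβ : 0 < β) (ha : 1 < a) (hx : t₀ < x) :
    HasDerivAt (blowupSolution β a t₀) (-(β * blowupSolution β a t₀ x ^ a)) x := by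
  have ha' : a - 1 ≠ 0 := (sub_pos.2 ha).ne'
  have hz : 0 < β * (a - 1) * (x - t₀) := by
    have := sub_pos.2 ha; have := sub_pos.2 hx; positivity
  have hlin : HasDerivAt (fun x => β * (a - 1) * (x - t₀)) (β * (a - 1)) x := by
    simpa using ((hasDerivAt_id x).sub_const t₀).const_mul (β * (a - 1))
  refine (hlin.rpow_const (p := -(a - 1)⁻¹) (Or.inl hz.ne')).congr_deriv ?_
  rw [blowupSolution, ← Real.rpow_mul hz.le, show -(a - 1)⁻¹ * a = -(a - 1)⁻¹ - 1 by
    field_simp; ring]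
  field_simp

theorem tendsto_blowupSolution (hβ : 0 < β) (ha : 1 < a) :
    Tendsto (blowupSolution β a t₀) (𝓝[>] t₀) atTop := by
  have hK : 0 < β * (a - 1) := mul_pos hβ (sub_pos.2 ha)
  have hlin : Tendsto (fun x => β * (a - 1) * (x - t₀)) (𝓝[>] t₀) (𝓝[>] 0) := by
    refine tendsto_nhdsWithin_iff.2 ⟨?_, eventually_nhdsWithin_of_forall fun x hx => ?_⟩
    · exact ((by fun_prop : Continuous fun x => β * (a - 1) * (x - t₀)).tendsto' t₀ 0
        (by simp)).mono_left nhdsWithin_le_nhds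
    · exact mul_pos hK (sub_pos.2 hx)
  exact (tendsto_rpow_neg_nhdsGT_zero (neg_neg_of_pos (inv_pos.2 (sub_pos.2 ha)))).comp hlin

/-- Since `ψ` blows up at `t₀`, no initial condition on `y` is needed. -/
theorem le_const_add_blowupSolution {y : ℝ → ℝ} {B : ℝ} (hβ : 0 < β) (ha : 1 < a) (hB : 0 ≤ B)
    (hy : Differentiable ℝ y)
    (hsuper : ∀ x, t₀ < x → B + blowupSolution β a t₀ x ≤ y x →
      deriv y x ≤ -(β * blowupSolution β a t₀ x ^ a))
    (hx : t₀ < x) : y x ≤ B + blowupSolution β a t₀ x := by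
  set ψ := blowupSolution β a t₀
  obtain ⟨M, hM⟩ := (isCompact_Icc (a := t₀) (b := x)).bddAbove_image hy.continuous.continuousOn
  obtain ⟨s, hMs, hs⟩ :=
    (((tendsto_blowupSolution hβ ha).eventually_ge_atTop M).and (Ioo_mem_nhdsGT hx)).exists
  have hψ' : ∀ z, s ≤ z → HasDerivAt ψ (-(β * ψ z ^ a)) z := fun z hz =>
    hasDerivAt_blowupSolution hβ ha (hs.1.trans_le hz)
  exact image_le_of_deriv_right_le_deriv_of_le_boundary (f := y) (B := fun z => B + ψ z)
    hy.continuous.continuousOn (fun z _ => (hy z).hasDerivAt.hasDerivWithinAt)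
    (by linarith [hM (mem_image_of_mem y ⟨hs.1.le, hs.2.le⟩)])
    (fun z hz => ((hψ' z hz.1).continuousAt.const_add B).continuousWithinAt)
    (fun z hz => ((hψ' z hz.1).const_add B).hasDerivWithinAt)
    (fun z hz => hsuper z (hs.1.trans_le hz.1)) (right_mem_Icc.2 hs.2.le)

end BlowupSolution

theorem stmt_3_general (f y : ℝ → ℝ) (β a : ℝ)
    (hβ : 0 < β) (ha : 1 < a)
    (hf_nonneg : ∀ t, 0 < t → 0 ≤ f t)
    (hf_mono : AntitoneOn f (Set.Ioi (0 : ℝ)))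
    (hy_C1 : ContDiff ℝ 1 y)
    (hineq : ∀ t, 0 < t → deriv y t ≤ f t - β * y t ^ a) :
    ∀ t₀, 0 < t₀ → ∀ t, t₀ < t →
      y t ≤ (f t₀ / β) ^ (1 / a) + (1 / (β * (a - 1) * (t - t₀))) ^ (1 / (a - 1)) := by
  intro t₀ ht₀ t ht
  set B := (f t₀ / β) ^ (1 / a)
  set ψ := blowupSolution β a t₀
  have hfβ : 0 ≤ f t₀ / β := div_nonneg (hf_nonneg t₀ ht₀) hβ.le
  have hB : 0 ≤ B := Real.rpow_nonneg hfβ _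
  have hBa : β * B ^ a = f t₀ := by
    rw [← Real.rpow_mul hfβ, one_div_mul_cancel (by linarith), Real.rpow_one]
    field_simp
  have hsuper : ∀ x, t₀ < x → B + ψ x ≤ y x → deriv y x ≤ -(β * ψ x ^ a) := by
    intro x hx hle
    have hψ := blowupSolution_nonneg hβ.le ha.le hx.le
    calc deriv y x ≤ f x - β * y x ^ a := hineq x (ht₀.trans hx)
      _ ≤ f t₀ - β * (B ^ a + ψ x ^ a) := by
        gcongr
        · exact hf_mono ht₀ (ht₀.trans hx) hx.le
        · exact (Real.add_rpow_le_rpow_add hB hψ ha.le).trans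
            (Real.rpow_le_rpow (by positivity) hle (by linarith))
      _ = -(β * ψ x ^ a) := by rw [← hBa]; ring
  rw [← blowupSolution_eq hβ.le ha.le ht.le]
  exact le_const_add_blowupSolution hβ ha hB (hy_C1.differentiable one_ne_zero) hsuper ht

theorem stmt_3 (f y : ℝ → ℝ) (β a : ℝ)
    (hβ : 0 < β) (ha : 1 < a)
    (hf_nonneg : ∀ t, 0 < t → 0 ≤ f t)
    (hf_mono : AntitoneOn f (Set.Ioi (0 : ℝ)))
    (hy_nonneg : ∀ t, 0 < t → 0 ≤ y t)
    (hy_C1 : ContDiff ℝ 1 y)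
    (hineq : ∀ t, 0 < t → deriv y t ≤ f t - β * y t ^ a) :
    ∀ t₀, 0 < t₀ → ∀ t, t₀ < t →
      y t ≤ (f t₀ / β) ^ (1 / a) + (1 / (β * (a - 1) * (t - t₀))) ^ (1 / (a - 1)) :=
  stmt_3_general f y β a hβ ha hf_nonneg hf_mono hy_C1 hineq
end

section
/- Fix n ≥ 1, m > 1, α ≥ 1, k > 1. Let r = (1−λ)(k+α−1)/(1 − λ(k+α−1)/(k+m−1)) and θ = (k'−1)(k+α−1)/(k'(k+α−2)), where λ = ((k+m−1)/(2k') − (k+m−1)/(2(k+α−1)))/((k+m−1)/(2k') − (n−2)/(2n)) and k' is any real with max(n(α−m)/2, 1) < k' < k+α−1. Then rθ < k+α−1 if and only if α < m + 2/n. -/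
/-!
Write `M = k + m - 1`, `K = k + α - 1` and `c = n (m - α)`. Both `1 - λ` and `1 - λ K / M` carry
the factor `1 / d` of the denominator of `λ`, so it cancels and `r = k' (c + 2K) / (c + 2k')`.
Then `r θ < K` amounts to `(k' - 1)(c + 2K) < (K - 1)(c + 2k')`, and the difference of the two
sides is `(K - k')(c + 2)`; since `k' < K`, this is positive exactly when `c + 2 > 0`,
i.e. when `α < m + 2 / n`.
-/

theorem r_exponent_eq {n M K k' : ℝ} (hn : n ≠ 0) (hM : M ≠ 0) (hK : K ≠ 0) (hk' : k' ≠ 0)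
    (hd : n * (M - k') + 2 * k' ≠ 0) (hc : n * (M - K) + 2 * k' ≠ 0) :
    (1 - (M / (2 * k') - M / (2 * K)) / (M / (2 * k') - (n - 2) / (2 * n))) * K /
        (1 - (M / (2 * k') - M / (2 * K)) / (M / (2 * k') - (n - 2) / (2 * n)) * K / M) =
      k' * (n * (M - K) + 2 * K) / (n * (M - K) + 2 * k') := by
  set d := M / (2 * k') - (n - 2) / (2 * n) with hd_def
  have hd' : d = (n * (M - k') + 2 * k') / (2 * n * k') := by
    rw [hd_def]; field_simp; ring
  have hd0 : d ≠ 0 := by rw [hd']; exact div_ne_zero hd (by positivity)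
  have h1 : 1 - (M / (2 * k') - M / (2 * K)) / d = (n * (M - K) + 2 * K) / (2 * n * K) / d := by
    rw [one_sub_div hd0, hd']; field_simp; ring
  have h2 : 1 - (M / (2 * k') - M / (2 * K)) / d * K / M =
      (n * (M - K) + 2 * k') / (2 * n * k') / d := by
    rw [mul_div_assoc, div_mul_eq_mul_div, one_sub_div hd0, hd']; field_simp; ring
  rw [h1, h2]
  field_simp

theorem r_exponent_mul_theta_lt_iff {c K k' : ℝ} (hk' : 1 < k') (hk'K : k' < K)
    (hc : 0 < c + 2 * k') :
    k' * (c + 2 * K) / (c + 2 * k') * ((k' - 1) * K / (k' * (K - 1))) < K ↔ 0 < c + 2 := by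
  have hK : 0 < K - 1 := by linarith
  have hsub : (K - 1) * (c + 2 * k') - (k' - 1) * (c + 2 * K) = (K - k') * (c + 2) := by ring
  have heq : k' * (c + 2 * K) / (c + 2 * k') * ((k' - 1) * K / (k' * (K - 1))) =
      K * ((k' - 1) * (c + 2 * K) / ((K - 1) * (c + 2 * k'))) := by
    field_simp
  rw [heq, mul_lt_iff_lt_one_right (by linarith), div_lt_one (mul_pos hK hc), ← sub_pos, hsub]
  exact ⟨fun h => pos_of_mul_pos_right h (by linarith), mul_pos (by linarith)⟩

theorem stmt_6_general (n : ℕ) (hn : 1 ≤ n) (m α k k' : ℝ)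
    (hm : 1 < m) (hk : 1 < k)
    (hk'lo : max (n * (α - m) / 2) 1 < k') (hk'hi : k' < k + α - 1) :
    (((1 - ((k + m - 1) / (2 * k') - (k + m - 1) / (2 * (k + α - 1))) /
          ((k + m - 1) / (2 * k') - (n - 2) / (2 * n))) * (k + α - 1)) /
        (1 - (((k + m - 1) / (2 * k') - (k + m - 1) / (2 * (k + α - 1))) /
            ((k + m - 1) / (2 * k') - (n - 2) / (2 * n))) * (k + α - 1) / (k + m - 1))) *
      ((k' - 1) * (k + α - 1) / (k' * (k + α - 2))) < k + α - 1 ↔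
    α < m + 2 / n := by
  have hn0 : (0 : ℝ) < n := by exact_mod_cast hn
  have hk'1 : 1 < k' := (le_max_right _ _).trans_lt hk'lo
  have hc : 0 < n * ((k + m - 1) - (k + α - 1)) + 2 * k' := by
    nlinarith [(le_max_left _ _).trans_lt hk'lo]
  have hd : 0 < n * ((k + m - 1) - k') + 2 * k' := by nlinarith
  have hα_iff : α < m + 2 / n ↔ (α - m) * n < 2 := by rw [← sub_lt_iff_lt_add', lt_div_iff₀ hn0]
  rw [show k + α - 2 = (k + α - 1) - 1 by ring,
    r_exponent_eq hn0.ne' (by linarith) (by linarith) (by linarith) hd.ne' hc.ne',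
    r_exponent_mul_theta_lt_iff hk'1 hk'hi hc, hα_iff]
  constructor <;> intro h <;> linarith

theorem stmt_6 (n : ℕ) (hn : 1 ≤ n) (m α k k' : ℝ)
    (hm : 1 < m) (hα : 1 ≤ α) (hk : 1 < k)
    (hk'lo : max (n * (α - m) / 2) 1 < k') (hk'hi : k' < k + α - 1) :
    (((1 - ((k + m - 1) / (2 * k') - (k + m - 1) / (2 * (k + α - 1))) /
          ((k + m - 1) / (2 * k') - (n - 2) / (2 * n))) * (k + α - 1)) /
        (1 - (((k + m - 1) / (2 * k') - (k + m - 1) / (2 * (k + α - 1))) /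
            ((k + m - 1) / (2 * k') - (n - 2) / (2 * n))) * (k + α - 1) / (k + m - 1))) *
      ((k' - 1) * (k + α - 1) / (k' * (k + α - 2))) < k + α - 1 ↔
    α < m + 2 / n :=
  stmt_6_general n hn m α k k' hm hk hk'lo hk'hi
end
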